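/- Let f : I → ℝ³ be a smooth unit speed space-like curve on S²₁ (⟨f,f⟩ = 1, ⟨f',f'⟩ = 1) with Sabban frame {f, t, s} and geodesic curvature κ_g. Let a > 0 and ξ₁ ∈ ℝ be constants, assume tanh(ξ₁)·κ_g(v) < 1 for all v, and define γ(v) = a·∫₀ᵛ f(t)dt + a·tanh(ξ₁)·∫₀ᵛ f(t) × f'(t) dt. Then γ'(v) is space-like with ⟨γ'(v), γ'(v)⟩ = a²/cosh²(ξ₁), and the curvature and torsion of γ, defined by κ(v) = ‖γ'(v) × γ''(v)‖ / ⟨γ'(v), γ'(v)⟩^{3/2} and τ(v) = det(γ'(v), γ''(v), γ'''(v)) / ‖γ'(v) × γ''(v)‖², are given by κ(v) = cosh²(ξ₁)·(1 − tanh(ξ₁)·κ_g(v))/a and τ(v) = cosh²(ξ₁)·(κ_g(v) − tanh(ξ₁))/a. -/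

import Mathlib

noncomputable section

open Real
open scoped ContDiff

/-- The Lorentzian (Minkowski) inner product on ℝ³: ⟨x,y⟩ = x₁y₁ + x₂y₂ − x₃y₃. -/
def mink (x y : Fin 3 → ℝ) : ℝ := x 0 * y 0 + x 1 * y 1 - x 2 * y 2

/-- The Lorentzian cross product on ℝ³:
x × y = (x₂y₃ − x₃y₂, x₃y₁ − x₁y₃, x₂y₁ − x₁y₂). -/
def mcross (x y : Fin 3 → ℝ) : Fin 3 → ℝ :=
  ![x 1 * y 2 - x 2 * y 1, x 2 * y 0 - x 0 * y 2, x 1 * y 0 - x 0 * y 1]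

/-- Determinant of three vectors in ℝ³ (as the rows of a 3×3 matrix). -/
def mdet (x y z : Fin 3 → ℝ) : ℝ := Matrix.det (Matrix.of ![x, y, z])

/-- The pseudo norm ‖x‖ = √|⟨x,x⟩|. -/
def mnorm (x : Fin 3 → ℝ) : ℝ := Real.sqrt |mink x x|

lemma mcross_apply0 (x y : Fin 3 → ℝ) : mcross x y 0 = x 1 * y 2 - x 2 * y 1 := rfl
lemma mcross_apply1 (x y : Fin 3 → ℝ) : mcross x y 1 = x 2 * y 0 - x 0 * y 2 := rfl
lemma mcross_apply2 (x y : Fin 3 → ℝ) : mcross x y 2 = x 1 * y 0 - x 0 * y 1 := rfl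

lemma mdet_eq (x y z : Fin 3 → ℝ) : mdet x y z =
    x 0 * (y 1 * z 2 - y 2 * z 1) - x 1 * (y 0 * z 2 - y 2 * z 0)
      + x 2 * (y 0 * z 1 - y 1 * z 0) := by
  simp [mdet, Matrix.det_fin_three]; ring

lemma mink_comm (x y : Fin 3 → ℝ) : mink x y = mink y x := by simp [mink]; ring

lemma U1 (x y : Fin 3 → ℝ) : mink (mcross x y) x = 0 := by
  simp [mink, mcross_apply0, mcross_apply1, mcross_apply2]; ring

lemma U1' (x y : Fin 3 → ℝ) : mink (mcross x y) y = 0 := by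
  simp [mink, mcross_apply0, mcross_apply1, mcross_apply2]; ring

lemma U2 (x y z w : Fin 3 → ℝ) :
    mink (mcross x y) (mcross z w) = mink x w * mink y z - mink x z * mink y w := by
  simp [mink, mcross_apply0, mcross_apply1, mcross_apply2]; ring

lemma U3 (x y z : Fin 3 → ℝ) : mdet x y z = mink (mcross x y) z := by
  rw [mdet_eq]; simp [mink, mcross_apply0, mcross_apply1, mcross_apply2]; ring

lemma U4 (x y z : Fin 3 → ℝ) :
    mcross x (mcross y z) = mink x y • z - mink x z • y := by
  funext i; fin_cases i <;>
    simp [mink, mcross, Pi.sub_apply, Pi.smul_apply, smul_eq_mul] <;> ring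

lemma mcross_anticomm (x y : Fin 3 → ℝ) : mcross x y = -mcross y x := by
  funext i; fin_cases i <;> simp [mcross] <;> ring

lemma mcross_self (x : Fin 3 → ℝ) : mcross x x = 0 := by
  funext i; fin_cases i <;> simp [mcross] <;> ring

lemma mdet_mul_mdet (x y z u v w : Fin 3 → ℝ) :
    mdet x y z * mdet u v w =
      -(mink x u * (mink y v * mink z w - mink y w * mink z v)
        - mink x v * (mink y u * mink z w - mink y w * mink z u)
        + mink x w * (mink y u * mink z v - mink y v * mink z u)) := by
  rw [mdet_eq, mdet_eq]; simp [mink]; ring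

lemma mdet_swap23 (x y z : Fin 3 → ℝ) : mdet x y z = -mdet x z y := by
  rw [mdet_eq, mdet_eq]; ring

lemma mdet_cyc (x y z : Fin 3 → ℝ) : mdet x y z = mdet z x y := by
  rw [mdet_eq, mdet_eq]; ring

lemma mcross_comb (p q r s : ℝ) (x y z w : Fin 3 → ℝ) :
    mcross (p • x + q • y) (r • z + s • w) =
      (p*r) • mcross x z + (p*s) • mcross x w + (q*r) • mcross y z + (q*s) • mcross y w := by
  funext i; fin_cases i <;>
    simp [mcross, Pi.add_apply, Pi.smul_apply, smul_eq_mul] <;> ring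

lemma mink_sq2 (p q : ℝ) (x y : Fin 3 → ℝ) :
    mink (p • x + q • y) (p • x + q • y) =
      p^2 * mink x x + q^2 * mink y y + 2*p*q * mink x y := by
  simp [mink, Pi.add_apply, Pi.smul_apply, smul_eq_mul]; ring

lemma mink_sq3 (p q r : ℝ) (x y z : Fin 3 → ℝ) :
    mink (p • x + q • y + r • z) (p • x + q • y + r • z) =
      p^2 * mink x x + q^2 * mink y y + r^2 * mink z z
        + 2*p*q * mink x y + 2*p*r * mink x z + 2*q*r * mink y z := by
  simp [mink, Pi.add_apply, Pi.smul_apply, smul_eq_mul]; ring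

lemma mink_comb33 (p q r s t u : ℝ) (x y z x' y' z' : Fin 3 → ℝ) :
    mink (p • x + q • y + r • z) (s • x' + t • y' + u • z') =
      p*s * mink x x' + p*t * mink x y' + p*u * mink x z'
      + q*s * mink y x' + q*t * mink y y' + q*u * mink y z'
      + r*s * mink z x' + r*t * mink z y' + r*u * mink z z' := by
  simp [mink, Pi.add_apply, Pi.smul_apply, smul_eq_mul]; ring

lemma HasDerivAt.mink_comp {x y : ℝ → Fin 3 → ℝ} {x' y' : Fin 3 → ℝ} {v : ℝ}
    (hx : HasDerivAt x x' v) (hy : HasDerivAt y y' v) :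
    HasDerivAt (fun w => mink (x w) (y w)) (mink x' (y v) + mink (x v) y') v := by
  have hx0 := hasDerivAt_pi.mp hx
  have hy0 := hasDerivAt_pi.mp hy
  have H := ((((hx0 0).mul (hy0 0)).add ((hx0 1).mul (hy0 1))).sub
    ((hx0 2).mul (hy0 2)))
  convert H using 1
  · rfl
  · rfl
  · funext w; simp [mink]
  · simp [mink]; ring

lemma HasDerivAt.mcross_comp {x y : ℝ → Fin 3 → ℝ} {x' y' : Fin 3 → ℝ} {v : ℝ}
    (hx : HasDerivAt x x' v) (hy : HasDerivAt y y' v) :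
    HasDerivAt (fun w => mcross (x w) (y w)) (mcross x' (y v) + mcross (x v) y') v := by
  have hx0 := hasDerivAt_pi.mp hx
  have hy0 := hasDerivAt_pi.mp hy
  rw [hasDerivAt_pi]
  intro i
  fin_cases i
  · convert (((hx0 1).mul (hy0 2)).sub ((hx0 2).mul (hy0 1))) using 1
    show mcross x' (y v) 0 + mcross (x v) y' 0 = _
    rw [mcross_apply0, mcross_apply0]; ring
    rfl
  · convert (((hx0 2).mul (hy0 0)).sub ((hx0 0).mul (hy0 2))) using 1
    show mcross x' (y v) 1 + mcross (x v) y' 1 = _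
    rw [mcross_apply1, mcross_apply1]; ring
    rfl
  · convert (((hx0 1).mul (hy0 0)).sub ((hx0 0).mul (hy0 1))) using 1
    show mcross x' (y v) 2 + mcross (x v) y' 2 = _
    rw [mcross_apply2, mcross_apply2]; ring
    rfl

set_option maxHeartbeats 1600000 in
/-- for a unit speed space-like curve f on S²₁ and
γ(v) = a·∫₀ᵛ f + a·tanh ξ₁·∫₀ᵛ f × f', the velocity γ' is space-like with
⟨γ', γ'⟩ = a²/cosh² ξ₁, and κ = cosh² ξ₁·(1 − tanh ξ₁·κ_g)/a,
τ = cosh² ξ₁·(κ_g − tanh ξ₁)/a. -/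
theorem deSitter_bertrand_curvature_torsion
    (a b : ℝ) (I : Set ℝ) (hI : I = Set.Ioo a b) (h0 : (0:ℝ) ∈ I)
    (f : ℝ → Fin 3 → ℝ) (hf : ContDiff ℝ (⊤ : ℕ∞) f)
    (hf1 : ∀ v ∈ I, mink (f v) (f v) = 1)
    (hf2 : ∀ v ∈ I, mink (deriv f v) (deriv f v) = 1)
    (κg : ℝ → ℝ) (hκg : ∀ v, κg v = mdet (f v) (deriv f v) (deriv (deriv f) v))
    (A ξ : ℝ) (hA : 0 < A)
    (hξκ : ∀ v ∈ I, Real.tanh ξ * κg v < 1)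
    (γ : ℝ → Fin 3 → ℝ)
    (hγ : ∀ v, γ v = A • (∫ w in (0:ℝ)..v, f w) +
        (A * Real.tanh ξ) • (∫ w in (0:ℝ)..v, mcross (f w) (deriv f w)))
    (κ τ : ℝ → ℝ)
    (hκdef : ∀ v, κ v = mnorm (mcross (deriv γ v) (deriv (deriv γ) v)) /
        (mink (deriv γ v) (deriv γ v)) ^ (3/2 : ℝ))
    (hτdef : ∀ v, τ v =
        mdet (deriv γ v) (deriv (deriv γ) v) (deriv (deriv (deriv γ)) v) /
        (mnorm (mcross (deriv γ v) (deriv (deriv γ) v))) ^ 2)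
    :
    ∀ v ∈ I,
      mink (deriv γ v) (deriv γ v) = A ^ 2 / Real.cosh ξ ^ 2 ∧
      κ v = Real.cosh ξ ^ 2 * (1 - Real.tanh ξ * κg v) / A ∧
      τ v = Real.cosh ξ ^ 2 * (κg v - Real.tanh ξ) / A := by

  -- smoothness infrastructure
  have hfi : ContDiff ℝ ∞ f := hf.of_le (by simp)
  have hfd : Differentiable ℝ f := (contDiff_infty_iff_deriv.mp hfi).1
  have hf1' : ContDiff ℝ ∞ (deriv f) := (contDiff_infty_iff_deriv.mp hfi).2
  have hf2' : ContDiff ℝ ∞ (deriv (deriv f)) := (contDiff_infty_iff_deriv.mp hf1').2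
  have hdf : ∀ w, HasDerivAt f (deriv f w) w := fun w => (hfd w).hasDerivAt
  have hdf1 : ∀ w, HasDerivAt (deriv f) (deriv (deriv f) w) w :=
    fun w => (((contDiff_infty_iff_deriv.mp hf1').1) w).hasDerivAt
  have hdf2 : ∀ w, HasDerivAt (deriv (deriv f)) (deriv (deriv (deriv f)) w) w :=
    fun w => (((contDiff_infty_iff_deriv.mp hf2').1) w).hasDerivAt
  have hdc : ∀ w, HasDerivAt (fun u => mcross (f u) (deriv f u))
      (mcross (deriv f w) (deriv f w) + mcross (f w) (deriv (deriv f) w)) w :=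
    fun w => (hdf w).mcross_comp (hdf1 w)
  have hcontc : Continuous (fun w => mcross (f w) (deriv f w)) :=
    Differentiable.continuous (fun w => (hdc w).differentiableAt)
  -- first derivative of γ
  have hγ1 : ∀ w, HasDerivAt γ
      (A • f w + (A * Real.tanh ξ) • mcross (f w) (deriv f w)) w := by
    intro w
    have h1 := ((hfi.continuous.integral_hasStrictDerivAt (0:ℝ) w).hasDerivAt).const_smul A
    have h2 := ((hcontc.integral_hasStrictDerivAt (0:ℝ) w).hasDerivAt).const_smul
      (A * Real.tanh ξ)
    exact (h1.add h2).congr_of_eventuallyEq (Filter.Eventually.of_forall hγ)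
  have hg1 : deriv γ = fun w => A • f w + (A * Real.tanh ξ) • mcross (f w) (deriv f w) :=
    funext fun w => (hγ1 w).deriv
  -- second derivative
  have hγ2 : ∀ w, HasDerivAt (deriv γ)
      (A • deriv f w + (A * Real.tanh ξ) •
        (mcross (deriv f w) (deriv f w) + mcross (f w) (deriv (deriv f) w))) w := by
    intro w; rw [hg1]
    exact ((hdf w).const_smul A).add ((hdc w).const_smul (A * Real.tanh ξ))
  have hg2 : deriv (deriv γ) = fun w => A • deriv f w + (A * Real.tanh ξ) •
      (mcross (deriv f w) (deriv f w) + mcross (f w) (deriv (deriv f) w)) :=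
    funext fun w => (hγ2 w).deriv
  -- third derivative
  have hdc2 : ∀ w, HasDerivAt (fun u => mcross (deriv f u) (deriv f u))
      (mcross (deriv (deriv f) w) (deriv f w) + mcross (deriv f w) (deriv (deriv f) w)) w :=
    fun w => (hdf1 w).mcross_comp (hdf1 w)
  have hdc3 : ∀ w, HasDerivAt (fun u => mcross (f u) (deriv (deriv f) u))
      (mcross (deriv f w) (deriv (deriv f) w) + mcross (f w) (deriv (deriv (deriv f)) w)) w :=
    fun w => (hdf w).mcross_comp (hdf2 w)
  have hγ3 : ∀ w, HasDerivAt (deriv (deriv γ))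
      (A • deriv (deriv f) w + (A * Real.tanh ξ) •
        ((mcross (deriv (deriv f) w) (deriv f w) + mcross (deriv f w) (deriv (deriv f) w))
          + (mcross (deriv f w) (deriv (deriv f) w)
            + mcross (f w) (deriv (deriv (deriv f)) w)))) w := by
    intro w; rw [hg2]
    exact ((hdf1 w).const_smul A).add (((hdc2 w).add (hdc3 w)).const_smul (A * Real.tanh ξ))
  -- main part
  intro v hv
  have hIo : IsOpen I := hI ▸ isOpen_Ioo
  have keyD : ∀ w ∈ I, ∀ (u : ℝ → ℝ) (r c : ℝ),
      (∀ x ∈ I, u x = r) → HasDerivAt u c w → c = 0 := by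
    intro w hw u r c hu hd
    have heq : u =ᶠ[nhds w] fun _ => r :=
      Filter.eventuallyEq_of_mem (hIo.mem_nhds hw) hu
    exact hd.unique ((hasDerivAt_const w r).congr_of_eventuallyEq heq)
  have ps3 : ∀ w ∈ I, mink (f w) (deriv f w) = 0 := by
    intro w hw
    have h0 := keyD w hw _ 1 _ hf1 ((hdf w).mink_comp (hdf w))
    have hc := mink_comm (deriv f w) (f w)
    linarith
  have ps4 : ∀ w ∈ I, mink (f w) (deriv (deriv f) w) = -1 := by
    intro w hw
    have h0 := keyD w hw _ 0 _ ps3 ((hdf w).mink_comp (hdf1 w))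
    have h2 := hf2 w hw
    have hc := mink_comm (deriv f w) (f w)
    linarith
  have ps5 : ∀ w ∈ I, mink (deriv f w) (deriv (deriv f) w) = 0 := by
    intro w hw
    have h0 := keyD w hw _ 1 _ hf2 ((hdf1 w).mink_comp (hdf1 w))
    have hc := mink_comm (deriv (deriv f) w) (deriv f w)
    linarith
  have ps6 : ∀ w ∈ I, mink (f w) (deriv (deriv (deriv f)) w) = 0 := by
    intro w hw
    have h0 := keyD w hw _ (-1) _ ps4 ((hdf w).mink_comp (hdf2 w))
    have hc := mink_comm (deriv f w) (f w)
    linarith [ps5 w hw]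
  have hTH : mink (deriv f v) (deriv (deriv (deriv f)) v) =
      -(mink (deriv (deriv f) v) (deriv (deriv f) v)) := by
    have h0 := keyD v hv _ 0 _ ps5 ((hdf1 v).mink_comp (hdf2 v))
    have hc := mink_comm (deriv (deriv f) v) (deriv f v)
    linarith
  -- scalar facts at v
  have hFF := hf1 v hv
  have hTT := hf2 v hv
  have hFT := ps3 v hv
  have hFG := ps4 v hv
  have hTG := ps5 v hv
  have hFH := ps6 v hv
  have hTF : mink (deriv f v) (f v) = 0 := by rw [mink_comm]; exact hFT
  have hGF : mink (deriv (deriv f) v) (f v) = -1 := by rw [mink_comm]; exact hFG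
  have hGT : mink (deriv (deriv f) v) (deriv f v) = 0 := by rw [mink_comm]; exact hTG
  have hSS : mink (mcross (f v) (deriv f v)) (mcross (f v) (deriv f v)) = -1 := by
    rw [U2, hTF, hFT, hFF, hTT]; ring
  have hSG : mink (mcross (f v) (deriv f v)) (deriv (deriv f) v) = κg v := by
    rw [← U3]; exact (hκg v).symm
  have hGG : mink (deriv (deriv f) v) (deriv (deriv f) v) = 1 - κg v ^ 2 := by
    have hp := mdet_mul_mdet (f v) (deriv f v) (deriv (deriv f) v)
      (f v) (deriv f v) (deriv (deriv f) v)
    rw [hFF, hTT, hFT, hFG, hTG, hGT, hTF, hGF, ← hκg v] at hp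
    linear_combination hp
  have hdetFGH : mdet (f v) (deriv (deriv f) v) (deriv (deriv (deriv f)) v) =
      κg v * (1 - κg v ^ 2) := by
    have hp := mdet_mul_mdet (f v) (deriv f v) (mcross (f v) (deriv f v))
      (f v) (deriv (deriv f) v) (deriv (deriv (deriv f)) v)
    rw [hFF, hFG, hFH, hTF, hTG, hTH, U1, hSG, hGG] at hp
    have h1 : mdet (f v) (deriv f v) (mcross (f v) (deriv f v)) = -1 := by
      rw [U3]; exact hSS
    rw [h1] at hp
    linear_combination -hp
  -- explicit derivatives at v
  have E1 : deriv γ v = A • f v + (A * Real.tanh ξ) • mcross (f v) (deriv f v) :=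
    (hγ1 v).deriv
  have E2 : deriv (deriv γ) v = A • deriv f v +
      (A * Real.tanh ξ) • mcross (f v) (deriv (deriv f) v) := by
    have h := (hγ2 v).deriv
    rw [mcross_self, zero_add] at h
    exact h
  have E3 : deriv (deriv (deriv γ)) v = A • deriv (deriv f) v
      + (A * Real.tanh ξ) • mcross (deriv f v) (deriv (deriv f) v)
      + (A * Real.tanh ξ) • mcross (f v) (deriv (deriv (deriv f)) v) := by
    have h := (hγ3 v).deriv
    rw [h]
    funext i; fin_cases i <;>
      simp [mcross_apply0, mcross_apply1, mcross_apply2, Pi.add_apply,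
        Pi.smul_apply, smul_eq_mul] <;> ring
  -- cross product of γ' and γ''
  have e1 : mcross (f v) (mcross (f v) (deriv (deriv f) v)) =
      mink (f v) (f v) • deriv (deriv f) v - mink (f v) (deriv (deriv f) v) • f v :=
    U4 _ _ _
  rw [hFF, hFG] at e1
  have e2 : mcross (mcross (f v) (deriv f v)) (deriv f v) =
      -(mink (deriv f v) (f v) • deriv f v - mink (deriv f v) (deriv f v) • f v) := by
    rw [mcross_anticomm, U4]
  rw [hTF, hTT] at e2
  have e3 : mcross (mcross (f v) (deriv f v)) (mcross (f v) (deriv (deriv f) v)) =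
      mink (mcross (f v) (deriv f v)) (f v) • deriv (deriv f) v
        - mink (mcross (f v) (deriv f v)) (deriv (deriv f) v) • f v :=
    U4 _ _ _
  rw [U1, hSG] at e3
  have hVx : mcross (deriv γ v) (deriv (deriv γ) v) =
      (A^2) • mcross (f v) (deriv f v) + (A^2 * Real.tanh ξ) • deriv (deriv f) v
        + (A^2 * (2 * Real.tanh ξ - Real.tanh ξ^2 * κg v)) • f v := by
    rw [E1, E2, mcross_comb, e1, e2, e3]
    funext i
    simp [Pi.add_apply, Pi.sub_apply, Pi.neg_apply, Pi.smul_apply, smul_eq_mul]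
    try ring
  -- scalar products for the torsion determinant
  have m2 : mink (mcross (f v) (deriv f v)) (mcross (deriv f v) (deriv (deriv f) v)) = -1 := by
    rw [U2, hFG, hTT, hFT, hTG]; ring
  have m3 : mink (mcross (f v) (deriv f v)) (mcross (f v) (deriv (deriv (deriv f)) v)) =
      1 - κg v ^ 2 := by
    rw [U2, hFH, hTF, hFF, hTH, hGG]; ring
  have m5 : mink (deriv (deriv f) v) (mcross (deriv f v) (deriv (deriv f) v)) = 0 := by
    rw [mink_comm]; exact U1' _ _
  have m6 : mink (deriv (deriv f) v) (mcross (f v) (deriv (deriv (deriv f)) v)) =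
      -(κg v * (1 - κg v ^ 2)) := by
    rw [mink_comm, ← U3, mdet_swap23, hdetFGH]
  have m8 : mink (f v) (mcross (deriv f v) (deriv (deriv f) v)) = κg v := by
    rw [mink_comm, ← U3, mdet_cyc]; exact (hκg v).symm
  have m9 : mink (f v) (mcross (f v) (deriv (deriv (deriv f)) v)) = 0 := by
    rw [mink_comm]; exact U1 _ _
  have hFS : mink (f v) (mcross (f v) (deriv f v)) = 0 := by
    rw [mink_comm]; exact U1 _ _
  have hGS : mink (deriv (deriv f) v) (mcross (f v) (deriv f v)) = κg v := by
    rw [mink_comm]; exact hSG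
  -- trig facts
  have hcoshpos := Real.cosh_pos ξ
  have hcosh : Real.cosh ξ ≠ 0 := hcoshpos.ne'
  have htanhsq : 1 - Real.tanh ξ ^ 2 = 1 / Real.cosh ξ ^ 2 := by
    rw [Real.tanh_eq_sinh_div_cosh]
    field_simp
    linarith [Real.cosh_sq ξ]
  have hP : 0 < 1 - Real.tanh ξ * κg v := by linarith [hξκ v hv]
  -- first claim
  have T1 : mink (deriv γ v) (deriv γ v) = A ^ 2 / Real.cosh ξ ^ 2 := by
    rw [E1, mink_sq2, hFF, hSS, hFS]
    have : A ^ 2 * 1 + (A * Real.tanh ξ) ^ 2 * (-1) + 2 * A * (A * Real.tanh ξ) * 0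
        = A ^ 2 * (1 - Real.tanh ξ ^ 2) := by ring
    rw [this, htanhsq]; ring
  -- the Minkowski square of γ' × γ''
  have hX : mink (mcross (deriv γ v) (deriv (deriv γ) v))
      (mcross (deriv γ v) (deriv (deriv γ) v)) =
      -((A^2 * (1 - Real.tanh ξ * κg v))^2 * (1 - Real.tanh ξ ^ 2)) := by
    rw [hVx, mink_sq3, hSS, hGG, hFF, hSG, U1, hGF]
    ring
  -- the norm of γ' × γ''
  have h1mt : 0 < 1 - Real.tanh ξ ^ 2 := by rw [htanhsq]; positivity
  have hmn : mnorm (mcross (deriv γ v) (deriv (deriv γ) v)) =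
      A^2 * (1 - Real.tanh ξ * κg v) / Real.cosh ξ := by
    rw [mnorm, hX]
    have habs : |-((A^2 * (1 - Real.tanh ξ * κg v))^2 * (1 - Real.tanh ξ ^ 2))| =
        (A^2 * (1 - Real.tanh ξ * κg v) / Real.cosh ξ)^2 := by
      rw [abs_of_nonpos (by nlinarith [sq_nonneg (A^2 * (1 - Real.tanh ξ * κg v))])]
      rw [neg_neg, htanhsq]
      field_simp
    rw [habs, Real.sqrt_sq (by positivity)]
  -- determinant of the three derivatives
  have hdet3 : mdet (deriv γ v) (deriv (deriv γ) v) (deriv (deriv (deriv γ)) v) =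
      A^3 * (1 - Real.tanh ξ * κg v)^2 * (κg v - Real.tanh ξ) := by
    rw [U3, hVx, E3, mink_comb33, hSG, m2, m3, hGG, m5, m6, hFG, m8, m9]
    ring
  have hAne : A ≠ 0 := hA.ne'
  have hden : (A ^ 2 / Real.cosh ξ ^ 2 : ℝ) ^ (3/2 : ℝ) = (A / Real.cosh ξ)^3 := by
    rw [show (A ^ 2 / Real.cosh ξ ^ 2 : ℝ) = (A / Real.cosh ξ)^2 by rw [div_pow]]
    rw [← Real.rpow_natCast (A / Real.cosh ξ) 2, ← Real.rpow_mul (by positivity)]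
    norm_num
    try rw [show (3:ℝ) = ((3:ℕ):ℝ) by norm_num, Real.rpow_natCast]
  refine ⟨T1, ?_, ?_⟩
  · rw [hκdef v, hmn, T1, hden]
    field_simp
  · rw [hτdef v, hdet3, hmn]
    have hPne : 1 - Real.tanh ξ * κg v ≠ 0 := hP.ne'
    field_simp
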